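/- arXiv:1606.03360 — 6 statements merged into one kernel-verified Lean document; each statement's English description precedes it below -/
import Mathlib

section
/- Let X be a complete CAT(0) metric space and let A ⊆ X be a nonempty bounded subset. Then the function q ↦ sup_{a∈A} d(q,a) attains its infimum at a unique point of X (the circumcenter of A). -/
/-- In a complete CAT(0) space (encoded by the existence of midpoints and the
CN-inequality), every nonempty bounded subset has a unique circumcenter: the
function `q ↦ sup_{a ∈ A} d(q,a)` attains its infimum at a unique point. -/
theorem circumcenter_exists_unique {X : Type*} [MetricSpace X] [CompleteSpace X]
    (hmid : ∀ y₁ y₂ : X, ∃ m : X,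
      dist y₁ m = dist y₁ y₂ / 2 ∧ dist y₂ m = dist y₁ y₂ / 2)
    (hCN : ∀ x y₁ y₂ m : X, dist y₁ m = dist y₁ y₂ / 2 → dist y₂ m = dist y₁ y₂ / 2 →
      dist x m ^ 2 ≤ dist x y₁ ^ 2 / 2 + dist x y₂ ^ 2 / 2 - dist y₁ y₂ ^ 2 / 4)
    (A : Set X) (hne : A.Nonempty) (hbdd : Bornology.IsBounded A) :
    ∃! q : X, ∀ q' : X, (⨆ a : A, dist q (a : X)) ≤ ⨆ a : A, dist q' (a : X) := by
  obtain ⟨a₀, ha₀⟩ := hne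
  haveI : Nonempty A := ⟨⟨a₀, ha₀⟩⟩
  haveI : Nonempty X := ⟨a₀⟩
  set r : X → ℝ := fun q => ⨆ a : A, dist q (a : X) with hrdef
  have hbdd' : ∀ q : X, BddAbove (Set.range fun a : A => dist q (a : X)) := by
    intro q
    obtain ⟨R, hR⟩ := hbdd.subset_closedBall q
    refine ⟨R, ?_⟩
    rintro _ ⟨a, rfl⟩
    have := hR a.2
    simpa [Metric.mem_closedBall, dist_comm] using this
  have hle : ∀ (q : X) (a : A), dist q (a : X) ≤ r q := fun q a => le_ciSup (hbdd' q) a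
  have hr0 : ∀ q, 0 ≤ r q := fun q => le_trans dist_nonneg (hle q ⟨a₀, ha₀⟩)
  have hlip : ∀ q q' : X, r q ≤ dist q q' + r q' := by
    intro q q'
    apply ciSup_le
    intro a
    calc dist q (a : X) ≤ dist q q' + dist q' (a : X) := dist_triangle _ _ _
      _ ≤ dist q q' + r q' := by linarith [hle q' a]
  -- infimum
  have hbb : BddBelow (Set.range r) := ⟨0, by rintro _ ⟨q, rfl⟩; exact hr0 q⟩
  set s : ℝ := ⨅ q : X, r q with hsdef
  have hs_le : ∀ q : X, s ≤ r q := fun q => ciInf_le hbb q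
  have hs0 : 0 ≤ s := le_ciInf hr0
  -- key CN estimate on r
  have key : ∀ q₁ q₂ : X, dist q₁ q₂ ^ 2 ≤ 2 * r q₁ ^ 2 + 2 * r q₂ ^ 2 - 4 * s ^ 2 := by
    intro q₁ q₂
    obtain ⟨m, hm1, hm2⟩ := hmid q₁ q₂
    have hRHS : ∀ a : A, dist m (a : X) ^ 2 ≤
        r q₁ ^ 2 / 2 + r q₂ ^ 2 / 2 - dist q₁ q₂ ^ 2 / 4 := by
      intro a
      have hcn := hCN (a : X) q₁ q₂ m hm1 hm2
      have h1 : dist (a : X) q₁ ≤ r q₁ := by rw [dist_comm]; exact hle q₁ a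
      have h2 : dist (a : X) q₂ ≤ r q₂ := by rw [dist_comm]; exact hle q₂ a
      have h1' : dist (a : X) q₁ ^ 2 ≤ r q₁ ^ 2 := pow_le_pow_left₀ dist_nonneg h1 2
      have h2' : dist (a : X) q₂ ^ 2 ≤ r q₂ ^ 2 := pow_le_pow_left₀ dist_nonneg h2 2
      rw [dist_comm m (a : X)]
      nlinarith
    set C : ℝ := r q₁ ^ 2 / 2 + r q₂ ^ 2 / 2 - dist q₁ q₂ ^ 2 / 4 with hC
    have hC0 : 0 ≤ C := le_trans (sq_nonneg _) (hRHS ⟨a₀, ha₀⟩)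
    have hrm : r m ≤ Real.sqrt C := by
      apply ciSup_le
      intro a
      have := hRHS a
      nlinarith [Real.sq_sqrt hC0, Real.sqrt_nonneg C, dist_nonneg (x := m) (y := (a : X))]
    have hrm2 : r m ^ 2 ≤ C := by
      have := pow_le_pow_left₀ (hr0 m) hrm 2
      rwa [Real.sq_sqrt hC0] at this
    have hsm : s ^ 2 ≤ r m ^ 2 := pow_le_pow_left₀ hs0 (hs_le m) 2
    simp only [hC] at hrm2
    nlinarith
  -- minimizing sequence
  have hu : ∀ n : ℕ, ∃ q : X, r q < s + 1 / (n + 1) := by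
    intro n
    apply exists_lt_of_ciInf_lt
    have : (0 : ℝ) < 1 / (n + 1) := by positivity
    linarith
  choose u hu using hu
  have hcauchy : CauchySeq u := by
    rw [Metric.cauchySeq_iff']
    intro ε hε
    have h84 : (0 : ℝ) < 8 * s + 4 := by linarith
    obtain ⟨N, hN⟩ := exists_nat_one_div_lt (show 0 < ε ^ 2 / (8 * s + 4) by positivity)
    refine ⟨N, fun n hn => ?_⟩
    have hεN : (1 : ℝ) / (N + 1) ≤ 1 := by
      rw [div_le_one (by positivity)]; linarith [Nat.cast_nonneg (α := ℝ) N]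
    have hεn : (1 : ℝ) / (n + 1) ≤ 1 / (N + 1) := by
      apply one_div_le_one_div_of_le (by positivity)
      have : (N : ℝ) ≤ n := Nat.cast_le.2 hn
      linarith
    have hεN0 : (0 : ℝ) < 1 / (N + 1) := by positivity
    have h1 : r (u n) < s + 1 / (N + 1) := lt_of_lt_of_le (hu n) (by linarith)
    have h2 : r (u N) < s + 1 / (N + 1) := hu N
    have hd2 : dist (u n) (u N) ^ 2 < ε ^ 2 := by
      have hk := key (u n) (u N)
      have e1 : r (u n) ^ 2 < (s + 1 / (N + 1)) ^ 2 := by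
        apply pow_lt_pow_left₀ h1 (hr0 _)
        norm_num
      have e2 : r (u N) ^ 2 < (s + 1 / (N + 1)) ^ 2 := by
        apply pow_lt_pow_left₀ h2 (hr0 _)
        norm_num
      have hNb : (8 * s + 4) * (1 / (N + 1)) < ε ^ 2 := by
        rw [lt_div_iff₀ h84] at hN
        nlinarith
      nlinarith
    exact lt_of_pow_lt_pow_left₀ 2 (le_of_lt hε) hd2
  obtain ⟨q, hq⟩ := cauchySeq_tendsto_of_complete hcauchy
  -- r q ≤ s
  have hrq : r q ≤ s := by
    by_contra h
    push_neg at h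
    set ε := r q - s with hεdef
    have hε : 0 < ε := by linarith
    obtain ⟨N₁, hN₁⟩ := exists_nat_one_div_lt (show (0:ℝ) < ε / 2 by linarith)
    obtain ⟨N₂, hN₂⟩ := Metric.tendsto_atTop.1 hq (ε / 2) (by linarith)
    set n := max N₁ N₂ with hn
    have hdn : dist (u n) q < ε / 2 := hN₂ n (le_max_right _ _)
    have h1n : (1 : ℝ) / (n + 1) < ε / 2 := by
      apply lt_of_le_of_lt _ hN₁
      apply one_div_le_one_div_of_le (by positivity)
      have : (N₁ : ℝ) ≤ n := Nat.cast_le.2 (le_max_left _ _)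
      linarith
    have := hlip q (u n)
    have := hu n
    rw [dist_comm] at hdn
    linarith
  -- existence and uniqueness
  refine ⟨q, fun q' => le_trans hrq (hs_le q'), ?_⟩
  intro y hy
  have hyq : r y = s ∧ r q = s := by
    constructor
    · exact le_antisymm (le_ciInf hy) (hs_le y)
    · exact le_antisymm hrq (hs_le q)
  have hk := key y q
  rw [hyq.1, hyq.2] at hk
  have : dist y q ^ 2 ≤ 0 := by nlinarith
  have hd0 : dist y q = 0 := by nlinarith [sq_nonneg (dist y q), dist_nonneg (x := y) (y := q)]
  exact dist_eq_zero.1 hd0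
end

section
/- For every t ≥ 0, the map of the hyperbolic upper half-plane ℍ → ℍ given by z ↦ Re z + i·e^{−t}·Im z is Lipschitz with constant e^t with respect to the hyperbolic distance. -/
open UpperHalfPlane

private lemma sinh_le_mul_cosh {a : ℝ} (ha : 0 ≤ a) : Real.sinh a ≤ a * Real.cosh a := by
  have h : MonotoneOn (fun a : ℝ => a * Real.cosh a - Real.sinh a) (Set.Ici 0) := by
    apply monotoneOn_of_deriv_nonneg (convex_Ici 0)
    · fun_prop
    · fun_prop
    · intro x hx
      have hd : HasDerivAt (fun a : ℝ => a * Real.cosh a - Real.sinh a)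
          (1 * Real.cosh x + x * Real.sinh x - Real.cosh x) x := by
        exact ((hasDerivAt_id x).mul (Real.hasDerivAt_cosh x)).sub (Real.hasDerivAt_sinh x)
      rw [hd.deriv]
      have hx' : 0 < x := by simpa using hx
      nlinarith [(Real.sinh_pos_iff.2 hx').le]
  have := h (Set.self_mem_Ici) (Set.mem_Ici.2 ha) ha
  simpa using this

private lemma mul_sinh_le_sinh_mul {k a : ℝ} (hk : 1 ≤ k) (ha : 0 ≤ a) :
    k * Real.sinh a ≤ Real.sinh (k * a) := by
  have h : MonotoneOn (fun k : ℝ => Real.sinh (k * a) - k * Real.sinh a) (Set.Ici 1) := by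
    apply monotoneOn_of_deriv_nonneg (convex_Ici 1)
    · fun_prop
    · fun_prop
    · intro x hx
      have hx' : 1 < x := by simpa using hx
      have hd : HasDerivAt (fun k : ℝ => Real.sinh (k * a) - k * Real.sinh a)
          (Real.cosh (x * a) * (1 * a) - 1 * Real.sinh a) x := by
        exact ((Real.hasDerivAt_sinh (x * a)).comp x
          ((hasDerivAt_id x).mul_const a)).sub ((hasDerivAt_id x).mul_const (Real.sinh a))
      rw [hd.deriv]
      have h1 : Real.sinh a ≤ a * Real.cosh a := sinh_le_mul_cosh ha
      have h2 : Real.cosh a ≤ Real.cosh (x * a) := by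
        rw [Real.cosh_le_cosh]
        rw [abs_of_nonneg ha, abs_of_nonneg (by positivity)]
        nlinarith
      nlinarith [Real.cosh_pos (x := a)]
  have := h (Set.self_mem_Ici) (Set.mem_Ici.2 hk) hk
  simp only [one_mul] at this
  linarith

/-- For `t ≥ 0`, the map `z ↦ Re z + i·e^{-t}·Im z` of the hyperbolic upper
half-plane is Lipschitz with constant `e^t` for the hyperbolic distance. -/
theorem lipschitz_shrink_im (t : ℝ) (ht : 0 ≤ t) :
    LipschitzWith (Real.toNNReal (Real.exp t))
      (fun z : UpperHalfPlane =>
        UpperHalfPlane.mk ⟨z.re, Real.exp (-t) * z.im⟩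
          (mul_pos (Real.exp_pos (-t)) z.im_pos)) := by
  apply LipschitzWith.of_dist_le_mul
  intro z w
  rw [Real.coe_toNNReal _ (Real.exp_nonneg t)]
  set c : ℝ := Real.exp (-t) with hc
  have hc0 : 0 < c := Real.exp_pos _
  have hc1 : c ≤ 1 := Real.exp_le_one_iff.2 (by linarith)
  set d : ℝ := dist z w with hd
  have hd0 : 0 ≤ d := dist_nonneg
  rw [UpperHalfPlane.dist_le_iff_le_sinh]
  have him : (UpperHalfPlane.mk ⟨z.re, c * z.im⟩
      (mul_pos hc0 z.im_pos)).im = c * z.im := rfl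
  have him' : (UpperHalfPlane.mk ⟨w.re, c * w.im⟩
      (mul_pos hc0 w.im_pos)).im = c * w.im := rfl
  -- numerator bound
  have hnum : dist ((UpperHalfPlane.mk ⟨z.re, c * z.im⟩ (mul_pos hc0 z.im_pos) : ℍ) : ℂ)
      ((UpperHalfPlane.mk ⟨w.re, c * w.im⟩ (mul_pos hc0 w.im_pos) : ℍ) : ℂ)
      ≤ dist (z : ℂ) (w : ℂ) := by
    rw [Complex.dist_eq_re_im, Complex.dist_eq_re_im]
    apply Real.sqrt_le_sqrt
    have : (c * z.im - c * w.im) ^ 2 = c ^ 2 * (z.im - w.im) ^ 2 := by ring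
    simp only [UpperHalfPlane.coe_mk, UpperHalfPlane.coe_re, UpperHalfPlane.coe_im]
    have hc2 : c ^ 2 ≤ 1 := by nlinarith
    nlinarith [sq_nonneg (z.im - w.im)]
  have hzim : 0 < z.im := z.im_pos
  have hwim : 0 < w.im := w.im_pos
  have hsqrt : Real.sqrt ((c * z.im) * (c * w.im)) = c * Real.sqrt (z.im * w.im) := by
    rw [show (c * z.im) * (c * w.im) = c ^ 2 * (z.im * w.im) by ring,
      Real.sqrt_mul (by positivity), Real.sqrt_sq hc0.le]
  have hsinh : Real.sinh (d / 2) = dist (z : ℂ) (w : ℂ) / (2 * Real.sqrt (z.im * w.im)) :=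
    UpperHalfPlane.sinh_half_dist z w
  have key : (1 / c) * Real.sinh (d / 2) ≤ Real.sinh (Real.exp t * d / 2) := by
    have h1c : 1 ≤ 1 / c := (le_div_iff₀ hc0).2 (by linarith)
    have := mul_sinh_le_sinh_mul h1c (by positivity : (0:ℝ) ≤ d / 2)
    have hcexp : 1 / c = Real.exp t := by
      rw [hc, Real.exp_neg, one_div, inv_inv]
    calc (1 / c) * Real.sinh (d / 2) ≤ Real.sinh ((1 / c) * (d / 2)) := this
      _ = Real.sinh (Real.exp t * d / 2) := by rw [hcexp]; ring_nf
  rw [him, him', hsqrt]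
  refine le_trans ?_ key
  rw [hsinh]
  have hrw : (1 / c) * (dist (z : ℂ) (w : ℂ) / (2 * Real.sqrt (z.im * w.im)))
      = dist (z : ℂ) (w : ℂ) / (2 * (c * Real.sqrt (z.im * w.im))) := by
    rw [one_div, inv_mul_eq_div, div_div]
    ring_nf
  rw [hrw]
  gcongr
end

section
/- Let K be a compact topological group and let U be a neighborhood of the identity in K. Then there exists a natural number n such that every element g ∈ K has a power g^k with 1 ≤ k ≤ n and g^k ∈ U. -/
open scoped Pointwise


/-- Uniform recurrence in compact groups: for every neighborhood `U` of the identity in a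
compact Hausdorff topological group `K`, there is an `n` such that every `g ∈ K` has a
power `g^k ∈ U` with `1 ≤ k ≤ n`. -/
theorem exists_pow_mem_of_compact {K : Type*} [Group K] [TopologicalSpace K]
    [IsTopologicalGroup K] [CompactSpace K] [T2Space K]
    (U : Set K) (hU : U ∈ nhds (1 : K)) :
    ∃ n : ℕ, ∀ g : K, ∃ k : ℕ, 1 ≤ k ∧ k ≤ n ∧ g ^ k ∈ U := by
  -- find open V with 1 ∈ V and V * V ⊆ U
  obtain ⟨V, hVopen, hV1, hVV⟩ := exists_open_nhds_one_mul_subset hU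
  -- symmetrize
  set W : Set K := V ∩ V⁻¹ with hW
  have hWopen : IsOpen W := hVopen.inter hVopen.inv
  have hW1 : (1 : K) ∈ W := ⟨hV1, by simpa using hV1⟩
  have hWW : W * W⁻¹ ⊆ U := by
    intro z hz
    rcases hz with ⟨a, ha, b, hb, rfl⟩
    exact hVV (Set.mul_mem_mul ha.1 (by simpa using hb.2))
  -- cover K by right translates W * {x}
  have hcover : (Set.univ : Set K) ⊆ ⋃ x : K, W * {x} := by
    intro y _
    exact Set.mem_iUnion.mpr ⟨y, ⟨1, hW1, y, rfl, one_mul y⟩⟩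
  obtain ⟨t, ht⟩ := isCompact_univ.elim_finite_subcover (fun x : K => W * {x})
    (fun x => hWopen.mul_right) hcover
  refine ⟨t.card, fun g => ?_⟩
  -- for each i, pick x ∈ t with g^(i+1) ∈ W * {x}
  have hsel : ∀ i : ℕ, ∃ x ∈ t, g ^ (i + 1) ∈ W * {x} := by
    intro i
    have := ht (Set.mem_univ (g ^ (i + 1)))
    simpa using this
  choose f hf hfg using hsel
  -- pigeonhole on i ∈ range (t.card + 1)
  have hcard : t.card < (Finset.range (t.card + 1)).card := by
    simp
  obtain ⟨i, hi, j, hj, hij, hfij⟩ :=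
    Finset.exists_ne_map_eq_of_card_lt_of_maps_to hcard (fun i _ => hf i)
  -- WLOG i < j
  wlog hlt : i < j generalizing i j
  · exact this j hj i hi hij.symm hfij.symm (by omega)
  have hjle : j < t.card + 1 := Finset.mem_range.mp hj
  refine ⟨j - i, by omega, by omega, ?_⟩
  obtain ⟨v, hv, y1, hy1, hveq⟩ := hfg j
  obtain ⟨w, hw, y2, hy2, hweq⟩ := hfg i
  rcases Set.mem_singleton_iff.mp hy1 with rfl
  rcases Set.mem_singleton_iff.mp hy2 with rfl
  have hkey : g ^ (j - i) = v * w⁻¹ := by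
    have h1 : g ^ (j - i) = g ^ (j + 1) * (g ^ (i + 1))⁻¹ := by
      rw [← pow_sub g (by omega : i + 1 ≤ j + 1)]
      congr 1
      omega
    rw [h1, ← hveq, ← hweq, hfij]
    group
  rw [hkey]
  exact hWW ⟨v, hv, w⁻¹, Set.inv_mem_inv.mpr hw, rfl⟩
end

section
/- Let K be a compact metric space and let A, B ⊆ K be nonempty closed subsets. Equip K×[0,1] with the sum metric d((x,s),(y,t)) = d(x,y) + |s−t|. Then the Hausdorff distance between the hypographs H(1_A) and H(1_B) of the indicator functions of A and B equals min{1, d_Haus(A,B)}, where d_Haus is the Hausdorff distance in K. -/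
variable {K : Type*} [MetricSpace K]

/-- The sum metric on `K × ℝ`. -/
def sumDist (a b : K × ℝ) : ℝ := dist a.1 b.1 + |a.2 - b.2|

/-- The hypograph of a function `φ : K → [0,1]`, as a subset of `K × [0,1]`. -/
def hyp (φ : K → ℝ) : Set (K × ℝ) := {q | 0 ≤ q.2 ∧ q.2 ≤ 1 ∧ q.2 ≤ φ q.1}

/-- Hausdorff distance between subsets of `K × ℝ` with respect to the sum metric. -/
noncomputable def hausSum (A B : Set (K × ℝ)) : ℝ :=
  sInf {ε : ℝ | 0 < ε ∧ (∀ a ∈ A, ∃ b ∈ B, sumDist a b ≤ ε) ∧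
    (∀ b ∈ B, ∃ a ∈ A, sumDist a b ≤ ε)}

lemma sumDist_comm (a b : K × ℝ) : sumDist a b = sumDist b a := by
  simp [sumDist, dist_comm, abs_sub_comm]

lemma cover_of_haus {A B : Set K} (ε : ℝ) (hε : 0 ≤ ε)
    (h : 1 ≤ ε ∨ ∀ x ∈ A, ∃ y ∈ B, dist x y ≤ ε) :
    ∀ a ∈ hyp (A.indicator fun _ => (1:ℝ)), ∃ b ∈ hyp (B.indicator fun _ => (1:ℝ)),
      sumDist a b ≤ ε := by
  rintro ⟨x, s⟩ ⟨hs0, hs1, hsi⟩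
  by_cases hx : x ∈ A
  · rcases h with h1 | h2
    · refine ⟨(x, 0), ⟨le_refl 0, zero_le_one,
        Set.indicator_apply_nonneg fun _ => zero_le_one⟩, ?_⟩
      simp only [sumDist, dist_self, sub_zero, abs_of_nonneg hs0]
      linarith
    · obtain ⟨y, hy, hd⟩ := h2 x hx
      refine ⟨(y, s), ⟨hs0, hs1, ?_⟩, ?_⟩
      · simpa [Set.indicator_of_mem hy] using hs1
      · simpa [sumDist] using hd
  · have hs : s = 0 := le_antisymm (by simpa [Set.indicator_of_notMem hx] using hsi) hs0
    subst hs
    exact ⟨(x, 0), ⟨le_refl 0, zero_le_one,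
      Set.indicator_apply_nonneg fun _ => zero_le_one⟩, by simpa [sumDist] using hε⟩

lemma infDist_le_of_cover {A B : Set K} (ε : ℝ) (hε : ε < 1)
    (h : ∀ a ∈ hyp (A.indicator fun _ => (1:ℝ)), ∃ b ∈ hyp (B.indicator fun _ => (1:ℝ)),
      sumDist a b ≤ ε) :
    ∀ x ∈ A, Metric.infDist x B ≤ ε := by
  intro x hx
  obtain ⟨⟨y, t⟩, ⟨ht0, ht1, hti⟩, hd⟩ :=
    h (x, 1) ⟨zero_le_one, le_refl 1, by simp [Set.indicator_of_mem hx]⟩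
  simp only [sumDist] at hd
  by_cases hy : y ∈ B
  · have habs : (0:ℝ) ≤ |1 - t| := abs_nonneg _
    calc Metric.infDist x B ≤ dist x y := Metric.infDist_le_dist_of_mem hy
      _ ≤ ε := by linarith
  · exfalso
    have ht : t = 0 := le_antisymm (by simpa [Set.indicator_of_notMem hy] using hti) ht0
    subst ht
    simp only [sub_zero, abs_one] at hd
    have := dist_nonneg (x := x) (y := y)
    linarith

/-- For nonempty closed subsets `A, B` of a compact metric space `K`, the Hausdorff
distance (for the sum metric on `K × [0,1]`) between the hypographs of the indicator
functions `1_A` and `1_B` equals `min{1, d_Haus(A,B)}`. -/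
theorem hausSum_hyp_indicator_eq [CompactSpace K]
    (A B : Set K) (hA : IsClosed A) (hB : IsClosed B)
    (hAne : A.Nonempty) (hBne : B.Nonempty) :
    hausSum (hyp (A.indicator fun _ => (1 : ℝ))) (hyp (B.indicator fun _ => (1 : ℝ))) =
      min 1 (Metric.hausdorffDist A B) := by
  have hEdist : EMetric.hausdorffEdist A B ≠ ⊤ :=
    Metric.hausdorffEdist_ne_top_of_nonempty_of_bounded hAne hBne
      hA.isCompact.isBounded hB.isCompact.isBounded
  set m := min 1 (Metric.hausdorffDist A B) with hmdef
  have hm0 : 0 ≤ m := le_min zero_le_one Metric.hausdorffDist_nonneg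
  have hset : {ε : ℝ | 0 < ε ∧
      (∀ a ∈ hyp (A.indicator fun _ => (1:ℝ)), ∃ b ∈ hyp (B.indicator fun _ => (1:ℝ)),
        sumDist a b ≤ ε) ∧
      (∀ b ∈ hyp (B.indicator fun _ => (1:ℝ)), ∃ a ∈ hyp (A.indicator fun _ => (1:ℝ)),
        sumDist a b ≤ ε)} = {ε : ℝ | 0 < ε ∧ m ≤ ε} := by
    ext ε
    simp only [Set.mem_setOf_eq]
    constructor
    · rintro ⟨hε, h1, h2⟩
      refine ⟨hε, ?_⟩
      by_cases hε1 : 1 ≤ ε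
      · exact le_trans (min_le_left _ _) hε1
      · push_neg at hε1
        have h2' : ∀ a ∈ hyp (B.indicator fun _ => (1:ℝ)),
            ∃ b ∈ hyp (A.indicator fun _ => (1:ℝ)), sumDist a b ≤ ε := by
          intro a ha
          obtain ⟨b, hb, hd⟩ := h2 a ha
          exact ⟨b, hb, by rwa [sumDist_comm]⟩
        have hAB := infDist_le_of_cover ε hε1 h1
        have hBA := infDist_le_of_cover ε hε1 h2'
        have : Metric.hausdorffDist A B ≤ ε :=
          Metric.hausdorffDist_le_of_infDist hε.le hAB hBA
        exact le_trans (min_le_right _ _) this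
    · rintro ⟨hε, hmε⟩
      refine ⟨hε, ?_, ?_⟩
      · refine cover_of_haus ε hε.le ?_
        by_cases hε1 : 1 ≤ ε
        · exact Or.inl hε1
        · push_neg at hε1
          right
          have hd : Metric.hausdorffDist A B ≤ ε := by
            rcases min_cases 1 (Metric.hausdorffDist A B) with ⟨h1, _⟩ | ⟨h1, h2⟩
            · rw [hmdef, h1] at hmε; linarith
            · rw [hmdef, h1] at hmε; exact hmε
          intro x hx
          obtain ⟨y, hy, heq⟩ := hB.isCompact.exists_infDist_eq_dist hBne x
          exact ⟨y, hy, heq ▸ le_trans (Metric.infDist_le_hausdorffDist_of_mem hx hEdist) hd⟩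
      · have hcov : ∀ a ∈ hyp (B.indicator fun _ => (1:ℝ)),
            ∃ b ∈ hyp (A.indicator fun _ => (1:ℝ)), sumDist a b ≤ ε := by
          refine cover_of_haus ε hε.le ?_
          by_cases hε1 : 1 ≤ ε
          · exact Or.inl hε1
          · push_neg at hε1
            right
            have hd : Metric.hausdorffDist B A ≤ ε := by
              rw [Metric.hausdorffDist_comm]
              rcases min_cases 1 (Metric.hausdorffDist A B) with ⟨h1, _⟩ | ⟨h1, h2⟩
              · rw [hmdef, h1] at hmε; linarith
              · rw [hmdef, h1] at hmε; exact hmε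
            intro x hx
            obtain ⟨y, hy, heq⟩ := hA.isCompact.exists_infDist_eq_dist hAne x
            refine ⟨y, hy, heq ▸ le_trans (Metric.infDist_le_hausdorffDist_of_mem hx ?_) hd⟩
            rw [EMetric.hausdorffEdist_comm]; exact hEdist
        intro b hb
        obtain ⟨a, ha, hdab⟩ := hcov b hb
        exact ⟨a, ha, by rwa [sumDist_comm]⟩
  rw [hausSum, hset]
  apply le_antisymm
  · refine le_of_forall_pos_le_add fun δ hδ => ?_
    refine le_trans (csInf_le ⟨0, fun x hx => hx.1.le⟩ ?_) le_rfl
    exact ⟨by linarith, by linarith⟩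
  · exact le_csInf ⟨m + 1, by constructor <;> linarith⟩ fun x hx => hx.2
end

section
/- Let G be a Lie group and suppose H_n ≤ G is a sequence of discrete, torsion-free subgroups converging in the Chabauty topology to a closed subgroup H ≤ G, and suppose H is discrete. Then H is torsion-free. -/
open Filter

open scoped Manifold Pointwise

/-- A charted space over a T2 model is T2 once it is a topological group:
it suffices to separate points from `1` using the chart at `1`. -/
private theorem chabauty_aux_t2 {E : Type*} [NormedAddCommGroup E] [NormedSpace ℝ E]
    {G : Type*} [TopologicalSpace G] [ChartedSpace E G] [Group G] [IsTopologicalGroup G] :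
    T2Space G := by
  apply IsTopologicalGroup.t2Space_of_one_sep
  intro x hx
  set e := chartAt E (1 : G) with he
  by_cases hxs : x ∈ e.source
  · have hne : e 1 ≠ e x := fun h => hx ((e.injOn (mem_chart_source E 1) hxs h).symm)
    refine ⟨e.source ∩ e ⁻¹' {e x}ᶜ, ?_, ?_⟩
    · exact (e.continuousOn.isOpen_inter_preimage e.open_source
        isOpen_compl_singleton).mem_nhds ⟨mem_chart_source E 1, hne⟩
    · intro hmem
      exact hmem.2 rfl
  · exact ⟨e.source, e.open_source.mem_nhds (mem_chart_source E 1), hxs⟩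

/-- A charted space is first countable if the model is. -/
private theorem chabauty_aux_firstCountable {E : Type*} [NormedAddCommGroup E]
    [NormedSpace ℝ E] {G : Type*} [TopologicalSpace G] [ChartedSpace E G] :
    FirstCountableTopology G := by
  constructor
  intro x
  rw [← (chartAt E x).symm_map_nhds_eq (mem_chart_source E x)]
  infer_instance

/-- A Chabauty limit of discrete torsion-free subgroups of a Lie group, if discrete,
is torsion-free. Chabauty convergence is encoded by its two sequence conditions. -/
theorem chabauty_limit_torsionFree
    {E : Type*} [NormedAddCommGroup E] [NormedSpace ℝ E] [FiniteDimensional ℝ E]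
    {G : Type*} [TopologicalSpace G] [ChartedSpace E G] [Group G] [IsTopologicalGroup G]
    [LieGroup (modelWithCornersSelf ℝ E) (⊤ : ℕ∞) G]
    (Hn : ℕ → Subgroup G) (H : Subgroup G)
    (hdisc : ∀ n, DiscreteTopology (Hn n))
    (htf : ∀ n, ∀ g ∈ Hn n, ∀ k : ℕ, 0 < k → g ^ k = 1 → g = 1)
    (hconv1 : ∀ φ : ℕ → ℕ, StrictMono φ → ∀ x : ℕ → G, (∀ j, x j ∈ Hn (φ j)) →
      ∀ g : G, Tendsto x atTop (nhds g) → g ∈ H)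
    (hconv2 : ∀ g ∈ H, ∃ x : ℕ → G, (∀ n, x n ∈ Hn n) ∧ Tendsto x atTop (nhds g))
    (hHdisc : DiscreteTopology H) :
    ∀ g ∈ H, ∀ k : ℕ, 0 < k → g ^ k = 1 → g = 1 := by
  haveI : T2Space G := chabauty_aux_t2 (E := E)
  haveI : FirstCountableTopology G := chabauty_aux_firstCountable (E := E)
  haveI : LocallyCompactSpace G := ChartedSpace.locallyCompactSpace E G
  intro g hg k hk hgk
  by_contra hg1
  -- a neighborhood of 1 meeting H only in 1
  obtain ⟨O, hO, hOH⟩ : ∃ O ∈ nhds (1 : G), O ∩ (H : Set G) = {1} :=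
    nhds_inter_eq_singleton_of_mem_discrete (isDiscrete_iff_discreteTopology.mpr hHdisc) H.one_mem
  -- a compact neighborhood inside O
  obtain ⟨K, hKnhds, hKO, hKcomp⟩ := local_compact_nhds hO
  -- an open V with V * V ⊆ K
  obtain ⟨V, hVo, h1V, hVV⟩ := exists_open_nhds_one_mul_subset hKnhds
  have hVsub : V ⊆ V * V := fun a ha => by
    simpa using Set.mul_mem_mul h1V ha
  -- approximating sequence for g
  obtain ⟨x, hxmem, hxlim⟩ := hconv2 g hg
  -- escape lemma: any nontrivial element of Hn n has a power outside V
  have escape : ∀ n : ℕ, ∀ y ∈ Hn n, y ≠ 1 → ∃ m : ℕ, y ^ (m + 1) ∉ V := by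
    intro n y hy hy1
    by_contra hall
    push_neg at hall
    haveI := hdisc n
    obtain ⟨V₀, hV₀, hV₀H⟩ : ∃ U ∈ nhds (1 : G), U ∩ ((Hn n : Set G)) = {1} :=
      nhds_inter_eq_singleton_of_mem_discrete (isDiscrete_iff_discreteTopology.mpr (hdisc n)) (Hn n).one_mem
    set p : ℕ → G := fun m => y ^ (m + 1) with hp
    have hpK : ∀ m, p m ∈ K := fun m => hVV (hVsub (hall m))
    have hle : Filter.map p atTop ≤ Filter.principal K :=
      le_principal_iff.2 (mem_map.2 (Eventually.of_forall hpK))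
    obtain ⟨z, -, hz⟩ := hKcomp.exists_mapClusterPt (u := p) hle
    -- a neighborhood U of z with a⁻¹ * b ∈ V₀ for a b ∈ U
    have hcont : Tendsto (fun q : G × G => q.1⁻¹ * q.2) (nhds (z, z)) (nhds (1 : G)) := by
      have : Tendsto (fun q : G × G => q.1⁻¹ * q.2) (nhds (z, z)) (nhds ((z, z).1⁻¹ * (z, z).2)) :=
        ((continuous_fst.inv.mul continuous_snd).tendsto ((z, z) : G × G))
      simpa only [inv_mul_cancel] using this
    obtain ⟨U1, hU1, U2, hU2, hU12⟩ := mem_nhds_prod_iff.1 (hcont hV₀)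
    have hfreq := (mapClusterPt_iff_frequently.1 hz) (U1 ∩ U2) (inter_mem hU1 hU2)
    obtain ⟨m1, hm1⟩ := hfreq.exists
    obtain ⟨m2, hm2U, hm2lt⟩ := (hfreq.and_eventually (eventually_gt_atTop m1)).exists
    have hmem : (p m1)⁻¹ * p m2 ∈ V₀ := hU12 (Set.mk_mem_prod hm1.1 hm2U.2)
    have key : (p m1)⁻¹ * p m2 = y ^ (m2 - m1) := by
      have h1 : y ^ (m1 + 1) * y ^ (m2 - m1) = y ^ (m2 + 1) := by
        rw [← pow_add]; congr 1; omega
      simp only [hp]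
      rw [← h1, inv_mul_cancel_left]
    rw [key] at hmem
    have hpow : y ^ (m2 - m1) ∈ Hn n := pow_mem hy _
    have : y ^ (m2 - m1) = 1 := by
      have : y ^ (m2 - m1) ∈ ({1} : Set G) := hV₀H ▸ Set.mem_inter hmem hpow
      simpa using this
    exact hy1 (htf n y hy (m2 - m1) (by omega) this)
  -- eventually x n ≠ 1 and (x n)^k ∈ V
  have hy : Tendsto (fun n => (x n) ^ k) atTop (nhds (1 : G)) := by
    have := hxlim.pow k
    rwa [hgk] at this
  have hev1 : ∀ᶠ n in atTop, x n ≠ 1 := hxlim.eventually_ne hg1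
  have hev2 : ∀ᶠ n in atTop, (x n) ^ k ∈ V := hy (hVo.mem_nhds h1V)
  obtain ⟨N, hN⟩ := (hev1.and hev2).exists_forall_of_atTop
  -- for each j, choose an element of Hn (N+j) in (V*V) \ V
  have haux : ∀ j : ℕ, ∃ z : G, z ∈ Hn (N + j) ∧ z ∈ V * V ∧ z ∉ V := by
    intro j
    obtain ⟨hne, hinV⟩ := hN (N + j) (Nat.le_add_right N j)
    set y : G := (x (N + j)) ^ k with hy'
    have hymem : y ∈ Hn (N + j) := pow_mem (hxmem (N + j)) k
    have hy1 : y ≠ 1 := fun h => hne (htf (N + j) (x (N + j)) (hxmem (N + j)) k hk h)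
    obtain ⟨m, hm⟩ := escape (N + j) y hymem hy1
    -- minimal escape power
    have hex : ∃ m, y ^ (m + 1) ∉ V := ⟨m, hm⟩
    classical
    set m0 := Nat.find hex with hm0
    refine ⟨y ^ (m0 + 1), pow_mem hymem _, ?_, Nat.find_spec hex⟩
    rcases Nat.eq_zero_or_pos m0 with h0 | h0
    · rw [h0]
      simpa using hVsub hinV
    · have hlt : m0 - 1 < m0 := by omega
      have hprev : y ^ ((m0 - 1) + 1) ∈ V := by
        have hmin := Nat.find_min hex hlt
        simpa using hmin
      have : y ^ (m0 + 1) = y ^ ((m0 - 1) + 1) * y := by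
        rw [← pow_succ]; congr 1; omega
      rw [this]
      exact Set.mul_mem_mul hprev hinV
  choose zf hzfmem hzfVV hzfV using haux
  -- extract a convergent subsequence in K
  have hzfK : ∀ j, zf j ∈ K := fun j => hVV (hzfVV j)
  obtain ⟨h, hhK, φ, hφ, hlim⟩ := hKcomp.tendsto_subseq hzfK
  -- the limit lies in H
  have hφ' : StrictMono (fun j => N + φ j) := fun a b hab => by
    simpa using hφ hab
  have hhH : h ∈ H :=
    hconv1 (fun j => N + φ j) hφ' (fun j => zf (φ j)) (fun j => hzfmem (φ j)) h hlim
  -- h ∈ O ∩ H so h = 1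
  have hh1 : h = (1 : G) := by
    have : h ∈ O ∩ (H : Set G) := ⟨hKO hhK, hhH⟩
    rw [hOH] at this
    simpa using this
  -- but h is a limit of points outside V, so h ∉ V
  have hhV : h ∉ V := by
    have : h ∈ Vᶜ :=
      hVo.isClosed_compl.mem_of_tendsto hlim (Eventually.of_forall fun j => hzfV (φ j))
    exact this
  exact hhV (hh1 ▸ h1V)
end

section
/- Let X be a set and d : X×X → [0,∞) a quasi-metric with constant K ≥ 1, i.e. d is symmetric, d(x,y) = 0 if and only if x = y, and d(x,z) ≤ K·(d(x,y) + d(y,z)) for all x,y,z. Then there exist a genuine metric ρ on X and constants β ≥ 1 and C ≥ 1 such that (1/C)·ρ(x,y)^β ≤ d(x,y) ≤ C·ρ(x,y)^β for all x, y ∈ X. -/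
open Finset

/-- Combinatorial Frink-style chain lemma: if `q` satisfies the four-point
inequality `hkey`, then `q` of the endpoints of any chain is at most twice
the sum of `q` along the chain. -/
private lemma frink_chain_lemma {X : Type*} (q : X → X → ℝ)
    (hq0 : ∀ x, q x x = 0) (hqnn : ∀ x y, 0 ≤ q x y)
    (hkey : ∀ x y z w S, 0 ≤ S → q x y ≤ S → q y z ≤ S → q z w ≤ S → q x w ≤ 2 * S) :
    ∀ n (f : ℕ → X), q (f 0) (f n) ≤ 2 * ∑ i ∈ Finset.range n, q (f i) (f (i + 1)) := by
  intro n
  induction n using Nat.strong_induction_on with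
  | _ n ih =>
    intro f
    rcases Nat.eq_zero_or_pos n with hn | hn
    · subst hn; simp [hq0]
    · classical
      set S := ∑ i ∈ Finset.range n, q (f i) (f (i + 1)) with hS
      have hS0 : 0 ≤ S := Finset.sum_nonneg fun i _ => hqnn _ _
      set P : ℕ → Prop := fun m => (∑ i ∈ Finset.range m, q (f i) (f (i + 1))) ≤ S / 2
        with hPdef
      have hP0 : P 0 := by simp only [hPdef, Finset.range_zero, Finset.sum_empty]; linarith
      set m := Nat.findGreatest P (n - 1) with hm
      have hmle : m ≤ n - 1 := Nat.findGreatest_le _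
      have hmn : m < n := lt_of_le_of_lt hmle (Nat.sub_lt hn one_pos)
      have hPm : P m := Nat.findGreatest_spec (Nat.zero_le _) hP0
      -- prefix bound
      have h1 : q (f 0) (f m) ≤ S := by
        have := ih m hmn f
        have hPm' : (∑ i ∈ Finset.range m, q (f i) (f (i + 1))) ≤ S / 2 := hPm
        linarith
      -- middle edge bound
      have h2 : q (f m) (f (m + 1)) ≤ S := by
        rw [hS]
        exact Finset.single_le_sum (f := fun i => q (f i) (f (i + 1)))
          (fun i _ => hqnn _ _) (Finset.mem_range.2 hmn)
      -- suffix bound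
      have hsuf : ∑ i ∈ Finset.Ico (m + 1) n, q (f i) (f (i + 1)) ≤ S / 2 := by
        rcases eq_or_lt_of_le hmle with heqm | hltm
        · have : m + 1 = n := by omega
          rw [this]
          simp only [Finset.Ico_self, Finset.sum_empty]
          linarith
        · have hnot : ¬ P (m + 1) :=
            Nat.findGreatest_is_greatest (Nat.lt_succ_self m) hltm
          have hnot' : ¬ (∑ i ∈ Finset.range (m + 1), q (f i) (f (i + 1))) ≤ S / 2 := hnot
          push_neg at hnot'
          have hsplit : (∑ i ∈ Finset.range (m + 1), q (f i) (f (i + 1)))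
              + ∑ i ∈ Finset.Ico (m + 1) n, q (f i) (f (i + 1)) = S :=
            Finset.sum_range_add_sum_Ico _ (by omega)
          linarith
      have h3 : q (f (m + 1)) (f n) ≤ S := by
        have hend : m + 1 + (n - (m + 1)) = n := by omega
        have hIH := ih (n - (m + 1)) (by omega) (fun i => f (m + 1 + i))
        simp only [← Nat.add_assoc, Nat.add_zero, hend] at hIH
        have hsum : (∑ i ∈ Finset.Ico (m + 1) n, q (f i) (f (i + 1)))
            = ∑ i ∈ Finset.range (n - (m + 1)), q (f (m + 1 + i)) (f (m + 1 + i + 1)) :=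
          Finset.sum_Ico_eq_sum_range _ _ _
        rw [← hsum] at hIH
        linarith
      exact hkey (f 0) (f m) (f (m + 1)) (f n) S hS0 h1 h2 h3

/-- From a symmetric, nonnegative `q` satisfying the chain lemma, build a genuine
metric `ρ` with `q / 2 ≤ ρ ≤ q`, as the infimum of chain sums. -/
private lemma metric_from_chains {X : Type*} (q : X → X → ℝ)
    (hqnn : ∀ x y, 0 ≤ q x y) (hqsymm : ∀ x y, q x y = q y x)
    (hqeq : ∀ x y, q x y = 0 ↔ x = y)
    (hchain : ∀ n (f : ℕ → X),
      q (f 0) (f n) ≤ 2 * ∑ i ∈ Finset.range n, q (f i) (f (i + 1))) :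
    ∃ ρ : X → X → ℝ, (∀ x y, 0 ≤ ρ x y) ∧ (∀ x y, ρ x y = ρ y x) ∧
      (∀ x y, ρ x y = 0 ↔ x = y) ∧ (∀ x y z, ρ x z ≤ ρ x y + ρ y z) ∧
      (∀ x y, q x y / 2 ≤ ρ x y ∧ ρ x y ≤ q x y) := by
  classical
  set T : X → X → Set ℝ := fun x y =>
    {s | ∃ n : ℕ, ∃ f : ℕ → X, 0 < n ∧ f 0 = x ∧ f n = y ∧
      s = ∑ i ∈ Finset.range n, q (f i) (f (i + 1))} with hT
  have hmem : ∀ x y, q x y ∈ T x y := by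
    intro x y
    refine ⟨1, fun i => if i = 0 then x else y, one_pos, if_pos rfl, if_neg one_ne_zero, ?_⟩
    simp
  have hlow : ∀ x y, ∀ s ∈ T x y, q x y / 2 ≤ s := by
    rintro x y s ⟨n, f, hn, h0, hn', rfl⟩
    have := hchain n f
    rw [h0, hn'] at this
    linarith
  have hbdd : ∀ x y, BddBelow (T x y) := fun x y => ⟨q x y / 2, fun s hs => hlow x y s hs⟩
  have hne : ∀ x y, (T x y).Nonempty := fun x y => ⟨q x y, hmem x y⟩
  set ρ : X → X → ℝ := fun x y => sInf (T x y) with hρ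
  have h_ub : ∀ x y, ρ x y ≤ q x y := fun x y => csInf_le (hbdd x y) (hmem x y)
  have h_lb : ∀ x y, q x y / 2 ≤ ρ x y := fun x y => le_csInf (hne x y) (hlow x y)
  have hnn : ∀ x y, 0 ≤ ρ x y := fun x y =>
    le_trans (by have := hqnn x y; linarith) (h_lb x y)
  -- symmetry
  have hsymm_le : ∀ x y, ρ x y ≤ ρ y x := by
    intro x y
    refine le_csInf (hne y x) ?_
    rintro s ⟨n, f, hn, h0, hn', rfl⟩
    refine csInf_le (hbdd x y) ⟨n, fun i => f (n - i), hn, ?_, ?_, ?_⟩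
    · simp [hn']
    · simp [h0]
    · rw [show (∑ i ∈ Finset.range n, q (f i) (f (i + 1)))
        = ∑ i ∈ Finset.range n, (fun j => q (f j) (f (j + 1))) (n - 1 - i) from
        (Finset.sum_range_reflect _ n).symm]
      refine Finset.sum_congr rfl fun i hi => ?_
      have hi' : i < n := Finset.mem_range.1 hi
      show q (f (n - 1 - i)) (f (n - 1 - i + 1)) = q (f (n - i)) (f (n - (i + 1)))
      rw [show n - (i + 1) = n - 1 - i from by omega,
        show n - i = n - 1 - i + 1 from by omega, hqsymm]
  have hsymm : ∀ x y, ρ x y = ρ y x := fun x y =>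
    le_antisymm (hsymm_le x y) (hsymm_le y x)
  -- zero iff
  have hzero : ∀ x y, ρ x y = 0 ↔ x = y := by
    intro x y
    constructor
    · intro h
      have h1 := h_lb x y
      rw [h] at h1
      have h2 : q x y = 0 := le_antisymm (by linarith) (hqnn x y)
      exact (hqeq x y).1 h2
    · rintro rfl
      have h1 := h_ub x x
      rw [(hqeq x x).2 rfl] at h1
      exact le_antisymm h1 (hnn x x)
  -- triangle inequality
  have htri : ∀ x y z, ρ x z ≤ ρ x y + ρ y z := by
    intro x y z
    have hconc : ∀ s ∈ T x y, ∀ t ∈ T y z, ρ x z ≤ s + t := by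
      rintro s ⟨n, f, hn, hf0, hfn, rfl⟩ t ⟨k, g, hk, hg0, hgk, rfl⟩
      set h : ℕ → X := fun i => if i < n then f i else g (i - n) with hh
      have hterm1 : ∀ i ∈ Finset.range n, q (h i) (h (i + 1)) = q (f i) (f (i + 1)) := by
        intro i hi
        have hi' : i < n := Finset.mem_range.1 hi
        have e1 : h i = f i := if_pos hi'
        have e2 : h (i + 1) = f (i + 1) := by
          by_cases hin : i + 1 < n
          · exact if_pos hin
          · have : i + 1 = n := by omega
            rw [hh]
            simp only [this, lt_irrefl, if_false, Nat.sub_self]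
            rw [hg0, ← hfn]
        rw [e1, e2]
      have hterm2 : ∀ i ∈ Finset.range k,
          q (h (n + i)) (h (n + i + 1)) = q (g i) (g (i + 1)) := by
        intro i hi
        have e1 : h (n + i) = g i := by
          show (if n + i < n then f (n + i) else g (n + i - n)) = g i
          rw [if_neg (by omega), show n + i - n = i from by omega]
        have e2 : h (n + i + 1) = g (i + 1) := by
          show (if n + i + 1 < n then f (n + i + 1) else g (n + i + 1 - n)) = g (i + 1)
          rw [if_neg (by omega), show n + i + 1 - n = i + 1 from by omega]
        rw [e1, e2]
      refine csInf_le (hbdd x z) ⟨n + k, h, by omega, ?_, ?_, ?_⟩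
      · rw [hh]; simp only []; rw [if_pos hn]; exact hf0
      · rw [hh]; simp only []; rw [if_neg (by omega)]
        rw [show n + k - n = k by omega]; exact hgk
      · rw [← Finset.sum_range_add_sum_Ico (fun i => q (h i) (h (i + 1)))
            (Nat.le_add_right n k)]
        congr 1
        · exact (Finset.sum_congr rfl hterm1).symm
        · rw [Finset.sum_Ico_eq_sum_range, show n + k - n = k from by omega]
          exact Finset.sum_congr rfl fun i hi => (hterm2 i hi).symm
    have hsub : ∀ s ∈ T x y, ρ x z - s ≤ ρ y z := by
      intro s hs
      refine le_csInf (hne y z) fun t ht => ?_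
      have := hconc s hs t ht
      linarith
    have : ρ x z - ρ y z ≤ ρ x y := by
      refine le_csInf (hne x y) fun s hs => ?_
      have := hsub s hs
      linarith
    linarith
  exact ⟨ρ, hnn, hsymm, hzero, htri, fun x y => ⟨h_lb x y, h_ub x y⟩⟩

/-- Frink/Aimar–Macías metrization theorem: every quasi-metric `d` with constant `K`
is comparable to a power `ρ^β` of a genuine metric `ρ`. -/
theorem quasimetric_comparable_to_power_of_metric
    {X : Type*} (d : X → X → ℝ) (K : ℝ) (hK : 1 ≤ K)
    (hnn : ∀ x y, 0 ≤ d x y) (hsymm : ∀ x y, d x y = d y x)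
    (heq : ∀ x y, d x y = 0 ↔ x = y)
    (htri : ∀ x y z, d x z ≤ K * (d x y + d y z)) :
    ∃ (ρ : X → X → ℝ) (β C : ℝ), 1 ≤ β ∧ 1 ≤ C ∧
      (∀ x y, 0 ≤ ρ x y) ∧ (∀ x y, ρ x y = ρ y x) ∧
      (∀ x y, ρ x y = 0 ↔ x = y) ∧
      (∀ x y z, ρ x z ≤ ρ x y + ρ y z) ∧
      ∀ x y, ρ x y ^ β / C ≤ d x y ∧ d x y ≤ C * ρ x y ^ β := by
  have hK0 : (0 : ℝ) < K := lt_of_lt_of_le one_pos hK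
  set L : ℝ := Real.logb 2 K with hL
  have hL0 : 0 ≤ L := Real.logb_nonneg one_lt_two hK
  set p : ℝ := 2 + 2 * L with hp_def
  have hp1 : (1 : ℝ) ≤ p := by rw [hp_def]; linarith
  have hp0 : (0 : ℝ) < p := lt_of_lt_of_le one_pos hp1
  have hKL : (2 : ℝ) ^ L = K := Real.rpow_logb two_pos (by norm_num) hK0
  have h2p : (2 : ℝ) ^ p = 4 * K ^ 2 := by
    rw [hp_def, show (2 : ℝ) + 2 * L = L + L + 1 + 1 by ring,
      Real.rpow_add two_pos, Real.rpow_add two_pos, Real.rpow_add two_pos,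
      Real.rpow_one, hKL]
    ring
  -- the snowflaked quasimetric
  set q : X → X → ℝ := fun x y => d x y ^ (1 / p) with hq
  have hqnn : ∀ x y, 0 ≤ q x y := fun x y => Real.rpow_nonneg (hnn x y) _
  have hdq : ∀ x y, d x y = q x y ^ p := by
    intro x y
    show d x y = (d x y ^ (1 / p)) ^ p
    rw [← Real.rpow_mul (hnn x y), one_div_mul_cancel (ne_of_gt hp0), Real.rpow_one]
  have hqsymm : ∀ x y, q x y = q y x := fun x y => by rw [hq]; simp only []; rw [hsymm]
  have hqeq : ∀ x y, q x y = 0 ↔ x = y := by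
    intro x y
    rw [hq]; simp only []
    constructor
    · intro h
      have : d x y = 0 := by
        by_contra hd
        have hd0 : 0 < d x y := lt_of_le_of_ne (hnn x y) (Ne.symm hd)
        exact absurd h (ne_of_gt (Real.rpow_pos_of_pos hd0 _))
      exact (heq x y).1 this
    · intro h
      rw [(heq x y).2 h, Real.zero_rpow (ne_of_gt (by positivity : (0:ℝ) < 1 / p))]
  have hq0 : ∀ x, q x x = 0 := fun x => (hqeq x x).2 rfl
  -- the key four-point inequality
  have hkey : ∀ x y z w S, 0 ≤ S → q x y ≤ S → q y z ≤ S → q z w ≤ S → q x w ≤ 2 * S := by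
    intro x y z w S hS0 h1 h2 h3
    have hd1 : d x y ≤ S ^ p := by
      rw [hdq]; exact Real.rpow_le_rpow (hqnn x y) h1 hp0.le
    have hd2 : d y z ≤ S ^ p := by
      rw [hdq]; exact Real.rpow_le_rpow (hqnn y z) h2 hp0.le
    have hd3 : d z w ≤ S ^ p := by
      rw [hdq]; exact Real.rpow_le_rpow (hqnn z w) h3 hp0.le
    have hSp0 : 0 ≤ S ^ p := Real.rpow_nonneg hS0 _
    have hdxw : d x w ≤ 4 * K ^ 2 * S ^ p := by
      have t1 := htri x y w
      have t2 := htri y z w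
      have hdyw : d y w ≤ 2 * K * S ^ p := by
        have := mul_le_mul_of_nonneg_left
          (show d y z + d z w ≤ 2 * S ^ p by linarith) hK0.le
        linarith
      have hsum : d x y + d y w ≤ S ^ p + 2 * K * S ^ p := by linarith
      have hmul := mul_le_mul_of_nonneg_left hsum hK0.le
      nlinarith [mul_nonneg (mul_nonneg (sub_nonneg.2 hK) hK0.le) hSp0,
        mul_nonneg (mul_nonneg hK0.le hK0.le) hSp0]
    have hdxw' : d x w ≤ (2 * S) ^ p := by
      rw [Real.mul_rpow (by norm_num) hS0, h2p]
      exact hdxw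
    have := Real.rpow_le_rpow (hnn x w) hdxw' (by positivity : (0:ℝ) ≤ 1 / p)
    rw [← Real.rpow_mul (by positivity : (0:ℝ) ≤ 2 * S),
      mul_one_div_cancel (ne_of_gt hp0), Real.rpow_one] at this
    calc q x w = d x w ^ (1 / p) := rfl
      _ ≤ 2 * S := this
  -- chain lemma and metric construction
  have hchain := frink_chain_lemma q hq0 hqnn hkey
  obtain ⟨ρ, hρnn, hρsymm, hρeq, hρtri, hρcomp⟩ :=
    metric_from_chains q hqnn hqsymm hqeq hchain
  refine ⟨ρ, p, 4 * K ^ 2, hp1, by nlinarith, hρnn, hρsymm, hρeq, hρtri, ?_⟩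
  intro x y
  obtain ⟨hlow, hub⟩ := hρcomp x y
  have hC1 : (1 : ℝ) ≤ 4 * K ^ 2 := by nlinarith
  have hρp : ρ x y ^ p ≤ d x y := by
    rw [hdq]
    exact Real.rpow_le_rpow (hρnn x y) hub hp0.le
  constructor
  · have hdiv : ρ x y ^ p / (4 * K ^ 2) ≤ ρ x y ^ p :=
      div_le_self (Real.rpow_nonneg (hρnn x y) p) hC1
    linarith
  · have hq2ρ : q x y ≤ 2 * ρ x y := by linarith
    calc d x y = q x y ^ p := hdq x y
      _ ≤ (2 * ρ x y) ^ p := Real.rpow_le_rpow (hqnn x y) hq2ρ hp0.le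
      _ = 2 ^ p * ρ x y ^ p := Real.mul_rpow (by norm_num) (hρnn x y)
      _ = 4 * K ^ 2 * ρ x y ^ p := by rw [h2p]
end
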